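/- arXiv:2004.12490 — 5 statements merged into one kernel-verified Lean document; each statement's English description precedes it below -/
import Mathlib

section
/- Let p be prime, n a positive integer, and c = (c_{ij}) an n×n matrix of nonnegative integers with c_{ii} = 0 for all i. Define Γ(c) = { x ∈ GL_n(ℤ_p) : p^{c_{ij}} divides (x_{ij} − δ_{ij}) for all i,j }. Then Γ(c) is closed under matrix multiplication if c_{ij} ≤ c_{ik} + c_{kj} for all i, j, k. -/
namespace Matrix

variable {ι R : Type*} [Fintype ι] [DecidableEq ι] [CommRing R]

theorem mul_sub_one_eq (A B : Matrix ι ι R) :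
    A * B - 1 = (A - 1) * (B - 1) + (A - 1) + (B - 1) := by
  noncomm_ring

theorem pow_dvd_mul_sub_one_apply {a : R} {c : ι → ι → ℕ}
    (htri : ∀ i j k, c i j ≤ c i k + c k j) {A B : Matrix ι ι R}
    (hA : ∀ i j, a ^ c i j ∣ (A - 1) i j) (hB : ∀ i j, a ^ c i j ∣ (B - 1) i j) (i j : ι) :
    a ^ c i j ∣ (A * B - 1) i j := by
  rw [mul_sub_one_eq, add_apply, add_apply, mul_apply]
  refine dvd_add (dvd_add (Finset.dvd_sum fun k _ => ?_) (hA i j)) (hB i j)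
  calc a ^ c i j ∣ a ^ (c i k + c k j) := pow_dvd_pow a (htri i j k)
    _ ∣ (A - 1) i k * (B - 1) k j := pow_add a _ _ ▸ mul_dvd_mul (hA i k) (hB k j)

end Matrix

theorem stmt_2_general (p : ℕ) [Fact p.Prime] (n : ℕ)
    (c : Fin n → Fin n → ℕ)
    (htri : ∀ i j k, c i j ≤ c i k + c k j)
    (x y : Matrix.GeneralLinearGroup (Fin n) ℤ_[p])
    (hx : ∀ i j, (p : ℤ_[p]) ^ (c i j) ∣
      ((x : Matrix (Fin n) (Fin n) ℤ_[p]) i j - if i = j then 1 else 0))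
    (hy : ∀ i j, (p : ℤ_[p]) ^ (c i j) ∣
      ((y : Matrix (Fin n) (Fin n) ℤ_[p]) i j - if i = j then 1 else 0)) :
    ∀ i j, (p : ℤ_[p]) ^ (c i j) ∣
      (((x * y : Matrix.GeneralLinearGroup (Fin n) ℤ_[p]) :
        Matrix (Fin n) (Fin n) ℤ_[p]) i j - if i = j then 1 else 0) := by
  simp only [← Matrix.one_apply, ← Matrix.sub_apply, Units.val_mul] at hx hy ⊢
  exact Matrix.pow_dvd_mul_sub_one_apply htri hx hy

/-- `Γ(c)` is closed under matrix multiplication whenever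
`c i j ≤ c i k + c k j` for all `i j k`. -/
theorem stmt_2 (p : ℕ) [Fact p.Prime] (n : ℕ) (hn : 0 < n)
    (c : Fin n → Fin n → ℕ) (hdiag : ∀ i, c i i = 0)
    (htri : ∀ i j k, c i j ≤ c i k + c k j)
    (x y : Matrix.GeneralLinearGroup (Fin n) ℤ_[p])
    (hx : ∀ i j, (p : ℤ_[p]) ^ (c i j) ∣
      ((x : Matrix (Fin n) (Fin n) ℤ_[p]) i j - if i = j then 1 else 0))
    (hy : ∀ i j, (p : ℤ_[p]) ^ (c i j) ∣
      ((y : Matrix (Fin n) (Fin n) ℤ_[p]) i j - if i = j then 1 else 0)) :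
    ∀ i j, (p : ℤ_[p]) ^ (c i j) ∣
      (((x * y : Matrix.GeneralLinearGroup (Fin n) ℤ_[p]) :
        Matrix (Fin n) (Fin n) ℤ_[p]) i j - if i = j then 1 else 0) :=
  stmt_2_general p n c htri x y hx hy
end

section
/- Let p be prime, n a positive integer, and c = (c_{ij}) an n×n matrix of nonnegative integers with c_{ii}=0 satisfying c_{ij} ≤ c_{ik} + c_{kj} for all i,j,k. Then Γ(c) = { x ∈ GL_n(ℤ_p) : p^{c_{ij}} | (x_{ij} − δ_{ij}) } is closed under taking inverses. -/
/-!
Reducing modulo the ideal `(p ^ c i j)` sends `x` into the finite group of units of the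
matrix ring over `ℤ_[p] ⧸ (p ^ c i j)`, so there `x⁻¹` is a power `x ^ N`. The triangle
inequality makes `Γ(c)` closed under multiplication, so `x ^ N ∈ Γ(c)`, and `x⁻¹ ≡ x ^ N`
modulo `p ^ c i j` gives the `(i, j)` congruence for `x⁻¹`.
-/

namespace Matrix

variable {n R : Type*} [Fintype n] [DecidableEq n] [CommRing R]

/-- `Γ(c)` is the case `I i j = (p ^ c i j)`, where `hI` is the triangle inequality for `c`. -/
def congruenceSubmonoid (I : n → n → Ideal R) (hI : ∀ i j k, I i k * I k j ≤ I i j) :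
    Submonoid (Matrix n n R) where
  carrier := {a | ∀ i j, (a - 1) i j ∈ I i j}
  one_mem' := by simp
  mul_mem' {a b} ha hb i j := by
    have hab : a * b - 1 = (a - 1) * (b - 1) + (a - 1) + (b - 1) := by noncomm_ring
    rw [hab, add_apply, add_apply, mul_apply]
    exact add_mem (add_mem (sum_mem fun k _ ↦ hI i j k (Ideal.mul_mem_mul (ha i k) (hb k j)))
      (ha i j)) (hb i j)

variable {I : n → n → Ideal R} {hI : ∀ i j k, I i k * I k j ≤ I i j}

theorem mem_congruenceSubmonoid {a : Matrix n n R} :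
    a ∈ congruenceSubmonoid I hI ↔ ∀ i j, (a - 1) i j ∈ I i j := Iff.rfl

theorem inv_mem_congruenceSubmonoid [∀ i j, Finite (R ⧸ I i j)] {x : GL n R}
    (hx : (x : Matrix n n R) ∈ congruenceSubmonoid I hI) :
    ((x⁻¹ : GL n R) : Matrix n n R) ∈ congruenceSubmonoid I hI := by
  intro i j
  let π := (Ideal.Quotient.mk (I i j)).mapMatrix (m := n)
  let g := Units.map π.toMonoidHom x
  obtain ⟨N, hN⟩ : g⁻¹ ∈ Submonoid.powers g :=
    mem_powers_iff_mem_zpowers.mpr (inv_mem (Subgroup.mem_zpowers g))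
  have hcong : π (x ^ N : GL n R) = π (x⁻¹ : GL n R) := by
    simpa [g, ← map_inv, ← map_pow] using congrArg Units.val hN
  have hentry :
      ((x ^ N : GL n R) : Matrix n n R) i j - ((x⁻¹ : GL n R) : Matrix n n R) i j ∈ I i j :=
    Ideal.Quotient.eq.mp (congrFun (congrFun hcong i) j)
  have hpow : ((x ^ N : GL n R) : Matrix n n R) ∈ congruenceSubmonoid I hI := by
    simpa using pow_mem hx N
  simpa using sub_mem (hpow i j) hentry

end Matrix

namespace PadicInt

variable {p : ℕ} [Fact p.Prime]

instance finite_quotient_span_pow (m : ℕ) :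
    Finite (ℤ_[p] ⧸ Ideal.span {(p : ℤ_[p]) ^ m}) := by
  have : NeZero (p ^ m) := ⟨pow_ne_zero _ (Fact.out : p.Prime).ne_zero⟩
  rw [← ker_toZModPow]
  exact .of_equiv _ (RingHom.quotientKerEquivOfSurjective (ZMod.ringHom_surjective _)).symm.toEquiv

end PadicInt

theorem stmt_3_general (p : ℕ) [Fact p.Prime] (n : ℕ)
    (c : Fin n → Fin n → ℕ)
    (htri : ∀ i j k, c i j ≤ c i k + c k j)
    (x : Matrix.GeneralLinearGroup (Fin n) ℤ_[p])
    (hx : ∀ i j, (p : ℤ_[p]) ^ (c i j) ∣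
      ((x : Matrix (Fin n) (Fin n) ℤ_[p]) i j - if i = j then 1 else 0)) :
    ∀ i j, (p : ℤ_[p]) ^ (c i j) ∣
      (((x⁻¹ : Matrix.GeneralLinearGroup (Fin n) ℤ_[p]) :
        Matrix (Fin n) (Fin n) ℤ_[p]) i j - if i = j then 1 else 0) := by
  have hI (i j k : Fin n) : Ideal.span {(p : ℤ_[p]) ^ c i k} *
      Ideal.span {(p : ℤ_[p]) ^ c k j} ≤ Ideal.span {(p : ℤ_[p]) ^ c i j} := by
    rw [Ideal.span_singleton_mul_span_singleton, ← pow_add,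
      Ideal.span_singleton_le_span_singleton]
    exact pow_dvd_pow _ (htri i j k)
  have hmem : ∀ {a : Matrix (Fin n) (Fin n) ℤ_[p]}, a ∈ Matrix.congruenceSubmonoid _ hI ↔
      ∀ i j, (p : ℤ_[p]) ^ c i j ∣ a i j - if i = j then 1 else 0 := by
    simp [Matrix.mem_congruenceSubmonoid, Ideal.mem_span_singleton, Matrix.one_apply]
  exact hmem.mp (Matrix.inv_mem_congruenceSubmonoid (hmem.mpr hx))

/-- `Γ(c)` is closed under taking inverses. -/
theorem stmt_3 (p : ℕ) [Fact p.Prime] (n : ℕ) (hn : 0 < n)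
    (c : Fin n → Fin n → ℕ) (hdiag : ∀ i, c i i = 0)
    (htri : ∀ i j k, c i j ≤ c i k + c k j)
    (x : Matrix.GeneralLinearGroup (Fin n) ℤ_[p])
    (hx : ∀ i j, (p : ℤ_[p]) ^ (c i j) ∣
      ((x : Matrix (Fin n) (Fin n) ℤ_[p]) i j - if i = j then 1 else 0)) :
    ∀ i j, (p : ℤ_[p]) ^ (c i j) ∣
      (((x⁻¹ : Matrix.GeneralLinearGroup (Fin n) ℤ_[p]) :
        Matrix (Fin n) (Fin n) ℤ_[p]) i j - if i = j then 1 else 0) :=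
  stmt_3_general p n c htri x hx
end

section
/- Let p be an odd prime and A a commutative Banach ℚ_p-algebra. Let s : ℤ_pˣ → Aˣ be a continuous character, set T = s(exp(p)) − 1, and suppose c is a positive integer such that |T^{p^{c−1}}| < p^{-1}. Then for all z ∈ 1 + p^c ℤ_p, s(z) is given by a convergent power series in (z − 1) with coefficients in A; explicitly s(z) = Σ_{k≥0} binom(log(z)/p^c, k) · ((1+T)^{p^{c-1}} − 1)^k where log is the p-adic logarithm. -/
/-!
Every `z ∈ 1 + p^c ℤ_p` is `exp (p^c x)` with `x = log z / p^c ∈ ℤ_p`: for odd `p` the double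
series `∑ₘ ∑_N (1/m!) [X^N] log(1+X)^m t^N` converges absolutely when `|t| ≤ 1/p`, so the formal
identity `exp (log (1 + X)) = 1 + X` can be evaluated at `t = z - 1`. Approximating `x` by natural
numbers `n`, the units `ε^(p^(c-1) n) = exp (p^c n)` tend to `z`, so by continuity `s z` is the
limit of `(1 + U)^n` with `U = (1 + T)^(p^(c-1)) - 1`. A multiplicative norm that is bounded on
`ℕ` is ultrametric, hence `‖U‖ ≤ ‖T‖ < 1`; since the binomial coefficients `binom(y, k)` are
continuous in `y ∈ ℤ_p` and bounded by `1`, dominated convergence turns the binomial expansions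
of `(1 + U)^n` into `∑ₖ binom(x, k) U^k`.
-/

open PowerSeries Filter Topology NormedSpace

theorem le_of_forall_pow_le_succ_mul_pow {a b : ℝ} (hb : 0 ≤ b)
    (h : ∀ m : ℕ, a ^ m ≤ (m + 1) * b ^ m) : a ≤ b := by
  by_contra! hba
  rcases hb.eq_or_lt with rfl | hb
  · linarith [h 1]
  obtain ⟨m, hm⟩ := Real.exists_natCast_add_one_lt_pow_of_one_lt ((one_lt_div hb).2 hba)
  rw [div_pow, lt_div_iff₀ (by positivity)] at hm
  linarith [h m]

theorem isUltrametricDist_of_normMulClass {A : Type*} [NormedCommRing A] [NormOneClass A]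
    [NormMulClass A] (h : ∀ n : ℕ, ‖(n : A)‖ ≤ 1) : IsUltrametricDist A := by
  refine IsUltrametricDist.isUltrametricDist_of_forall_norm_add_le_max_norm fun x y => ?_
  refine le_of_forall_pow_le_succ_mul_pow (by positivity) fun m => ?_
  rw [← norm_pow, add_pow]
  refine (norm_sum_le _ _).trans ?_
  have hterm : ∀ k ∈ Finset.range (m + 1),
      ‖x ^ k * y ^ (m - k) * (m.choose k : A)‖ ≤ max ‖x‖ ‖y‖ ^ m := by
    intro k hk
    rw [norm_mul, norm_mul, norm_pow, norm_pow,
      ← pow_mul_pow_sub _ (Finset.mem_range_succ_iff.1 hk)]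
    refine (mul_le_of_le_one_right (by positivity) (h _)).trans ?_
    gcongr
    exacts [le_max_left _ _, le_max_right _ _]
  simpa using Finset.sum_le_sum hterm

theorem norm_one_add_pow_sub_one_le {A : Type*} [NormedRing A] [NormOneClass A]
    [IsUltrametricDist A] {T : A} (hT : ‖T‖ ≤ 1) (n : ℕ) : ‖(1 + T) ^ n - 1‖ ≤ ‖T‖ := by
  have h1T : ‖1 + T‖ ≤ 1 := (IsUltrametricDist.norm_add_le_max _ _).trans (by simpa using hT)
  induction n with
  | zero => simp
  | succ n ih =>
    rw [pow_succ, mul_one_add, add_sub_right_comm]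
    refine (IsUltrametricDist.norm_add_le_max _ _).trans (max_le ih ?_)
    exact (norm_mul_le _ _).trans (mul_le_of_le_one_left (norm_nonneg _)
      ((norm_pow_le _ n).trans (pow_le_one₀ (norm_nonneg _) h1T)))

namespace PowerSeries

theorem coeff_pow_eq_zero_of_lt {R : Type*} [CommRing R] {g : R⟦X⟧} (hg : constantCoeff g = 0)
    {m N : ℕ} (h : N < m) : coeff N (g ^ m) = 0 :=
  coeff_of_lt_order N ((Nat.cast_lt.2 h).trans_le (le_order_pow_of_constantCoeff_eq_zero m hg))

theorem coeff_subst_eq_sum_range {R S : Type*} [CommRing R] [CommRing S] [Algebra R S]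
    {g : S⟦X⟧} (hg : constantCoeff g = 0) (f : R⟦X⟧) (N : ℕ) :
    coeff N (f.subst g) = ∑ m ∈ Finset.range (N + 1), coeff m f • coeff N (g ^ m) := by
  rw [coeff_subst' (HasSubst.of_constantCoeff_zero' hg)]
  refine finsum_eq_sum_of_support_subset _ fun m hm => ?_
  by_contra hmN
  exact hm (by simp only [coeff_pow_eq_zero_of_lt hg (by simpa using hmN), smul_zero])

section RatAlgebra

variable {A : Type*} [CommRing A] [Algebra ℚ A]

theorem one_add_X_mul_derivative_log : (1 + X) * d⁄dX A (log A) = 1 := by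
  ext n
  rw [deriv_log, add_mul, one_mul, map_add, coeff_one]
  cases n with
  | zero => simp
  | succ n => simp [coeff_succ_X_mul, pow_succ]

theorem eq_one_add_X_of_one_add_X_mul_derivative {f : A⟦X⟧} (hf : (1 + X) * d⁄dX A f = f)
    (h0 : constantCoeff f = 1) : f = 1 + X := by
  set g := f - (1 + X) with hg
  have hdg : (1 + X) * d⁄dX A g = g := by
    rw [hg, map_sub, mul_sub, hf]
    simp
  have hcoeff (n : ℕ) : coeff (n + 1) g * (n + 1) + coeff n g * n = coeff n g := by
    have := congrArg (coeff n) hdg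
    cases n with
    | zero =>
      rw [add_mul, one_mul, map_add, coeff_zero_X_mul, add_zero, coeff_derivative] at this
      simpa using this
    | succ n => simpa [add_mul, coeff_succ_X_mul, coeff_derivative] using this
  have hunit (n : ℕ) : IsUnit ((n : A) + 1) := by
    simpa using (isUnit_iff_ne_zero.2 (Nat.cast_add_one_ne_zero n : (n : ℚ) + 1 ≠ 0)).map
      (algebraMap ℚ A)
  suffices ∀ n, coeff n g = 0 from
    sub_eq_zero.1 (show g = 0 from ext fun n => by simpa using this n)
  intro n
  induction n with
  | zero => simp [hg, h0]
  | succ n ih =>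
    have := hcoeff n
    rw [ih, zero_mul, add_zero] at this
    exact (hunit n).mul_left_eq_zero.1 this

theorem exp_subst_log : (exp A).subst (log A) = 1 + X := by
  apply eq_one_add_X_of_one_add_X_mul_derivative
  · rw [derivative_subst HasSubst.log, derivative_exp, mul_left_comm, one_add_X_mul_derivative_log,
      mul_one]
  · rw [← coeff_zero_eq_constantCoeff_apply, coeff_subst_eq_sum_range constantCoeff_log]
    simp

end RatAlgebra

section Evaluation

variable {K : Type*} [NormedField K] [IsUltrametricDist K]

theorem norm_coeff_pow_le {f : K⟦X⟧} {a R : ℝ} (ha : 0 ≤ a) (hR : 0 ≤ R)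
    (hf : ∀ n, ‖coeff n f‖ ≤ a * R ^ n) (m N : ℕ) : ‖coeff N (f ^ m)‖ ≤ a ^ m * R ^ N := by
  induction m generalizing N with
  | zero =>
    rw [pow_zero, coeff_one]
    split_ifs with h
    · simp [h]
    · simpa using pow_nonneg hR N
  | succ m ih =>
    rw [pow_succ, coeff_mul]
    refine IsUltrametricDist.norm_sum_le_of_forall_le_of_nonneg (by positivity) fun ij hij => ?_
    rw [norm_mul, ← Finset.HasAntidiagonal.mem_antidiagonal.1 hij]
    calc ‖coeff ij.1 (f ^ m)‖ * ‖coeff ij.2 f‖ ≤ (a ^ m * R ^ ij.1) * (a * R ^ ij.2) := by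
          gcongr
          · exact ih ij.1
          · exact hf ij.2
      _ = a ^ (m + 1) * R ^ (ij.1 + ij.2) := by ring

theorem hasSum_coeff_pow_mul_pow [CompleteSpace K] {f : K⟦X⟧} {a R : ℝ} (ha : 0 ≤ a)
    (hR : 0 ≤ R) (hf : ∀ n, ‖coeff n f‖ ≤ a * R ^ n) {t y : K} (ht : R * ‖t‖ < 1)
    (hy : HasSum (fun n => coeff n f * t ^ n) y) (m : ℕ) :
    HasSum (fun N => coeff N (f ^ m) * t ^ N) (y ^ m) := by
  have hsummable (k : ℕ) : Summable fun N => ‖coeff N (f ^ k) * t ^ N‖ := by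
    refine ((summable_geometric_of_lt_one (by positivity) ht).mul_left (a ^ k)).of_nonneg_of_le
      (fun _ => norm_nonneg _) fun N => ?_
    rw [norm_mul, norm_pow, mul_pow, ← mul_assoc]
    gcongr
    exact norm_coeff_pow_le ha hR hf k N
  induction m with
  | zero =>
    simp only [pow_zero]
    convert hasSum_ite_eq 0 (1 : K) with N
    split_ifs with h <;> simp [h, coeff_one]
  | succ m ih =>
    refine (hsummable (m + 1)).of_norm.hasSum_iff.2 ?_
    rw [pow_succ y, ← ih.tsum_eq, ← hy.tsum_eq,
      tsum_mul_tsum_eq_tsum_sum_antidiagonal_of_summable_norm (hsummable m)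
        (hsummable 1 |>.congr ?_)]
    · refine tsum_congr fun N => ?_
      rw [pow_succ, coeff_mul, Finset.sum_mul]
      refine Finset.sum_congr rfl fun ij hij => ?_
      rw [← Finset.HasAntidiagonal.mem_antidiagonal.1 hij, pow_add]
      ring
    · simp

end Evaluation

end PowerSeries

section Padic

variable {p : ℕ} [Fact p.Prime]

theorem Padic.norm_inv_natCast {n : ℕ} (hn : n ≠ 0) :
    ‖(n : ℚ_[p])⁻¹‖ = (p : ℝ) ^ padicValNat p n := by
  rw [norm_inv, Padic.norm_eq_zpow_neg_valuation (by exact_mod_cast hn), Padic.valuation_natCast,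
    zpow_neg, inv_inv, zpow_natCast]

theorem Padic.norm_inv_natCast_le {n : ℕ} (hn : n ≠ 0) : ‖(n : ℚ_[p])⁻¹‖ ≤ n := by
  rw [Padic.norm_inv_natCast hn]
  exact_mod_cast Nat.le_of_dvd (Nat.pos_of_ne_zero hn) pow_padicValNat_dvd

theorem Padic.norm_inv_factorial_le (hp : Odd p) (k : ℕ) :
    ‖(k.factorial : ℚ_[p])⁻¹‖ ≤ √(p : ℝ) ^ k := by
  rw [Padic.norm_inv_natCast k.factorial_ne_zero]
  have hval : 2 * padicValNat p k.factorial ≤ k :=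
    calc 2 * padicValNat p k.factorial ≤ (p - 1) * padicValNat p k.factorial := by
          gcongr
          have := (Fact.out : p.Prime).odd_iff.1 hp
          omega
      _ ≤ k := sub_one_mul_padicValNat_factorial (p := p) k ▸ Nat.sub_le _ _
  rw [show (p : ℝ) ^ padicValNat p k.factorial = √(p : ℝ) ^ (2 * padicValNat p k.factorial) by
    rw [pow_mul, Real.sq_sqrt (Nat.cast_nonneg p)]]
  exact pow_le_pow_right₀ (Real.one_le_sqrt.2 (Nat.one_le_cast.2 (Fact.out : p.Prime).one_le)) hval

theorem Padic.mem_eball_radius_expSeries (hp : Odd p) {y : ℚ_[p]} (hy : ‖y‖ ≤ (p : ℝ)⁻¹) :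
    y ∈ Metric.eball 0 (expSeries ℚ_[p] ℚ_[p]).radius := by
  have hp1 : (1 : ℝ) < p := Nat.one_lt_cast.2 (Fact.out : p.Prime).one_lt
  have hsqrt : 0 < √(p : ℝ) := Real.sqrt_pos.2 (by linarith)
  let r : NNReal := ⟨(√(p : ℝ))⁻¹, by positivity⟩
  have hr : (r : ENNReal) ≤ (expSeries ℚ_[p] ℚ_[p]).radius := by
    refine (expSeries ℚ_[p] ℚ_[p]).le_radius_of_bound 1 fun n => ?_
    rw [expSeries, norm_smul, ContinuousMultilinearMap.norm_mkPiAlgebraFin, mul_one]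
    calc ‖(n.factorial : ℚ_[p])⁻¹‖ * (√(p : ℝ))⁻¹ ^ n ≤ √(p : ℝ) ^ n * (√(p : ℝ))⁻¹ ^ n := by
          gcongr
          exact Padic.norm_inv_factorial_le hp n
      _ = 1 := by rw [← mul_pow, mul_inv_cancel₀ hsqrt.ne', one_pow]
  refine lt_of_lt_of_le ?_ hr
  rw [edist_zero_right, ← ofReal_norm,
    ENNReal.ofReal_lt_iff_lt_toReal (norm_nonneg _) ENNReal.coe_ne_top]
  exact hy.trans_lt (inv_strictAnti₀ hsqrt (Real.sqrt_lt_self_iff.2 hp1))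

theorem Padic.exp_natCast_mul (hp : Odd p) {y : ℚ_[p]} (hy : ‖y‖ ≤ (p : ℝ)⁻¹) (n : ℕ) :
    exp ((n : ℚ_[p]) * y) = exp y ^ n := by
  induction n with
  | zero => simp
  | succ n ih =>
    have hny : ‖(n : ℚ_[p]) * y‖ ≤ (p : ℝ)⁻¹ := by
      rw [norm_mul]
      exact (mul_le_of_le_one_left (norm_nonneg _)
        (IsUltrametricDist.norm_natCast_le_one _ n)).trans hy
    rw [Nat.cast_succ, add_one_mul, exp_add_of_mem_ball (Padic.mem_eball_radius_expSeries hp hny)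
      (Padic.mem_eball_radius_expSeries hp hy), ih, pow_succ]

theorem Padic.continuousAt_exp (hp : Odd p) {y : ℚ_[p]} (hy : ‖y‖ ≤ (p : ℝ)⁻¹) :
    ContinuousAt exp y :=
  (continuousOn_exp (𝕂 := ℚ_[p])).continuousAt
    (Metric.isOpen_eball.mem_nhds (Padic.mem_eball_radius_expSeries hp hy))

/-- `log (1 + t)`, indexed as in the statement of `stmt_8` so that the theorem can use it
verbatim. -/
noncomputable def Padic.logOneAdd (t : ℚ_[p]) : ℚ_[p] :=
  ∑' m : ℕ, (-1 : ℚ_[p]) ^ m / ((m : ℚ_[p]) + 1) * t ^ (m + 1)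

theorem Padic.norm_coeff_log_le (n : ℕ) : ‖coeff n (log ℚ_[p])‖ ≤ 2⁻¹ * 2 ^ n := by
  rw [coeff_log]
  split_ifs with hn
  · simp
  obtain ⟨m, rfl⟩ := Nat.exists_eq_succ_of_ne_zero hn
  simp only [map_div₀, map_pow, map_neg, map_one, map_natCast, norm_div, norm_pow, norm_neg,
    norm_one, one_pow, one_div]
  calc ‖((m + 1 : ℕ) : ℚ_[p])‖⁻¹ ≤ ((m + 1 : ℕ) : ℝ) := by
        simpa using Padic.norm_inv_natCast_le (p := p) hn
    _ ≤ 2⁻¹ * 2 ^ (m + 1) := by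
      have : ((m + 1 : ℕ) : ℝ) ≤ 2 ^ m := by exact_mod_cast Nat.lt_two_pow_self
      rw [pow_succ]
      linarith

theorem Padic.hasSum_logOneAdd {t : ℚ_[p]} (ht : 2 * ‖t‖ < 1) :
    HasSum (fun n => coeff n (log ℚ_[p]) * t ^ n) (Padic.logOneAdd t) := by
  have hs : Summable fun n => coeff n (log ℚ_[p]) * t ^ n := by
    refine .of_norm <| ((summable_geometric_of_lt_one (by positivity) ht).mul_left 2⁻¹)
      |>.of_nonneg_of_le (fun _ => norm_nonneg _) fun n => ?_
    rw [norm_mul, norm_pow, mul_pow, ← mul_assoc]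
    gcongr
    exact Padic.norm_coeff_log_le n
  have hcoeff (m : ℕ) : coeff (m + 1) (log ℚ_[p]) = (-1 : ℚ_[p]) ^ m / ((m : ℚ_[p]) + 1) := by
    simp [coeff_log, pow_succ]
  refine (hasSum_nat_add_iff' 1).1 ?_
  simpa [hcoeff, Padic.logOneAdd] using ((summable_nat_add_iff 1).2 hs).hasSum

theorem Padic.norm_logOneAdd_le {t : ℚ_[p]} (ht : 2 * ‖t‖ < 1) : ‖Padic.logOneAdd t‖ ≤ ‖t‖ := by
  rw [← (Padic.hasSum_logOneAdd ht).tsum_eq]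
  refine IsUltrametricDist.norm_tsum_le_of_forall_le_of_nonneg (norm_nonneg _) fun n => ?_
  rcases n with _ | n
  · simp
  rw [norm_mul, norm_pow, pow_succ']
  calc ‖coeff (n + 1) (log ℚ_[p])‖ * (‖t‖ * ‖t‖ ^ n) ≤ 2⁻¹ * 2 ^ (n + 1) * (‖t‖ * ‖t‖ ^ n) := by
        gcongr
        exact Padic.norm_coeff_log_le _
    _ = ‖t‖ * (2 * ‖t‖) ^ n := by ring
    _ ≤ ‖t‖ := mul_le_of_le_one_right (norm_nonneg _) (pow_le_one₀ (by positivity) ht.le)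

theorem Padic.summable_coeff_exp_mul_coeff_log_pow (hp : Odd p) {t : ℚ_[p]}
    (ht : ‖t‖ ≤ (p : ℝ)⁻¹) :
    Summable fun q : ℕ × ℕ =>
      coeff q.1 (exp ℚ_[p]) * (coeff q.2 (log ℚ_[p] ^ q.1) * t ^ q.2) := by
  set F : ℕ × ℕ → ℚ_[p] := fun q => coeff q.1 (exp ℚ_[p]) * (coeff q.2 (log ℚ_[p] ^ q.1) * t ^ q.2)
  have hp3 : (3 : ℝ) ≤ p := by exact_mod_cast (Fact.out : p.Prime).odd_iff.1 hp
  have hsqrt : √(p : ℝ) * (p : ℝ)⁻¹ < 1 := by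
    rw [mul_inv_lt_iff₀ (by positivity), one_mul]
    exact Real.sqrt_lt_self_iff.2 (by linarith)
  have h2p : 2 * (p : ℝ)⁻¹ < 1 := by
    rw [← div_eq_mul_inv, div_lt_one (by positivity)]
    linarith
  have hbound (m r : ℕ) :
      ‖F (m, m + r)‖ ≤ (√(p : ℝ) * (p : ℝ)⁻¹) ^ m * (2 * (p : ℝ)⁻¹) ^ r := by
    have hlogm := norm_coeff_pow_le (by norm_num) (by norm_num)
      (Padic.norm_coeff_log_le (p := p)) m (m + r)
    calc ‖F (m, m + r)‖ ≤ √(p : ℝ) ^ m * ((2⁻¹) ^ m * 2 ^ (m + r) * (p : ℝ)⁻¹ ^ (m + r)) := by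
          simp only [F, norm_mul, norm_pow]
          gcongr
          simpa [coeff_exp] using Padic.norm_inv_factorial_le hp m
      _ = (√(p : ℝ) * (p : ℝ)⁻¹) ^ m * (2 * (p : ℝ)⁻¹) ^ r := by
          rw [pow_add 2, ← mul_assoc (2⁻¹ ^ m), ← mul_pow, inv_mul_cancel₀ two_ne_zero, one_pow,
            one_mul]
          ring
  -- `F (m, N)` vanishes for `N < m`, so it is enough to sum over the pairs `(m, m + r)`.
  have hgeom := (summable_geometric_of_lt_one (by positivity) hsqrt).mul_of_nonneg
    (summable_geometric_of_lt_one (by positivity) h2p)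
    (fun _ => by positivity) (fun _ => by positivity)
  have hcomp : Summable (F ∘ fun q : ℕ × ℕ => (q.1, q.1 + q.2)) :=
    .of_norm (hgeom.of_nonneg_of_le (fun _ => norm_nonneg _) fun q => hbound q.1 q.2)
  refine (Function.Injective.summable_iff ?_ ?_).1 hcomp
  · rintro ⟨m, r⟩ ⟨m', r'⟩ h
    simp only [Prod.mk.injEq] at h
    ext <;> omega
  · rintro ⟨m, N⟩ hq
    have hNm : N < m := by
      by_contra! h
      exact hq ⟨(m, N - m), by simp [Nat.add_sub_cancel' h]⟩
    simp [F, coeff_pow_eq_zero_of_lt constantCoeff_log hNm]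

/-- Summing the double series of `Padic.summable_coeff_exp_mul_coeff_log_pow` over `N` first
gives `exp (log (1 + t))`; summing over `m` first gives the coefficients of
`exp ∘ log (1 + X) = 1 + X`. -/
theorem Padic.exp_logOneAdd (hp : Odd p) {t : ℚ_[p]} (ht : ‖t‖ ≤ (p : ℝ)⁻¹) :
    exp (Padic.logOneAdd t) = 1 + t := by
  set F : ℕ × ℕ → ℚ_[p] := fun q => coeff q.1 (exp ℚ_[p]) * (coeff q.2 (log ℚ_[p] ^ q.1) * t ^ q.2)
  have hF : Summable F := Padic.summable_coeff_exp_mul_coeff_log_pow hp ht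
  have hp3 : (3 : ℝ) ≤ p := by exact_mod_cast (Fact.out : p.Prime).odd_iff.1 hp
  have ht2 : 2 * ‖t‖ < 1 := by
    have : (p : ℝ)⁻¹ ≤ 3⁻¹ := inv_anti₀ (by norm_num) hp3
    linarith
  set L := Padic.logOneAdd t
  have hrow (m : ℕ) : HasSum (fun N => F (m, N)) (coeff m (exp ℚ_[p]) * L ^ m) :=
    (hasSum_coeff_pow_mul_pow (by norm_num) (by norm_num) Padic.norm_coeff_log_le (by linarith)
      (Padic.hasSum_logOneAdd ht2) m).mul_left _
  have hcol (N : ℕ) : HasSum (fun m => F (m, N)) (coeff N (1 + X : ℚ_[p]⟦X⟧) * t ^ N) := by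
    have hsum : coeff N (1 + X : ℚ_[p]⟦X⟧) * t ^ N = ∑ m ∈ Finset.range (N + 1), F (m, N) := by
      rw [← exp_subst_log, coeff_subst_eq_sum_range constantCoeff_log, Finset.sum_mul]
      simp only [F, smul_eq_mul, mul_assoc]
    rw [hsum]
    refine hasSum_sum_of_ne_finset_zero fun m hm => ?_
    simp only [F, coeff_pow_eq_zero_of_lt constantCoeff_log (show N < m by simpa using hm),
      zero_mul, mul_zero]
  have hexp : HasSum (fun m => coeff m (exp ℚ_[p]) * L ^ m) (exp L) := by
    convert expSeries_hasSum_exp_of_mem_ball' (𝕂 := ℚ_[p]) L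
      (Padic.mem_eball_radius_expSeries hp ((Padic.norm_logOneAdd_le ht2).trans ht)) using 2 with m
    simp [coeff_exp]
  have h1t : HasSum (fun N => coeff N (1 + X : ℚ_[p]⟦X⟧) * t ^ N) (1 + t) := by
    convert (hasSum_ite_eq 0 (1 : ℚ_[p])).add (hasSum_ite_eq 1 t) using 2 with N
    rcases N with _ | _ | N <;> simp [coeff_one, coeff_X]
  have hswap : ∑' q : ℕ × ℕ, F q.swap = ∑' q, F q := (Equiv.prodComm ℕ ℕ).tsum_eq F
  rw [hexp.unique (hF.hasSum.prod_fiberwise hrow),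
    h1t.unique (hswap ▸ hF.prod_symm.hasSum.prod_fiberwise hcol)]

theorem PadicInt.exists_eq_exp_mul_pow (hp : Odd p) {c : ℕ} (hc : 0 < c) {z : ℤ_[p]}
    (hz : (p : ℤ_[p]) ^ c ∣ z - 1) :
    ∃ x : ℤ_[p], (x : ℚ_[p]) = Padic.logOneAdd ((z : ℚ_[p]) - 1) / (p : ℚ_[p]) ^ c ∧
      (z : ℚ_[p]) = exp ((x : ℚ_[p]) * (p : ℚ_[p]) ^ c) := by
  have hp0 : (0 : ℝ) < p := by exact_mod_cast (Fact.out : p.Prime).pos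
  have hp3 : (3 : ℝ) ≤ p := by exact_mod_cast (Fact.out : p.Prime).odd_iff.1 hp
  have hp1 : (p : ℝ)⁻¹ ≤ 3⁻¹ := inv_anti₀ (by norm_num) hp3
  have ht : ‖(z : ℚ_[p]) - 1‖ ≤ (p : ℝ)⁻¹ ^ c := by
    obtain ⟨w, hw⟩ := hz
    rw [← PadicInt.coe_one, ← PadicInt.coe_sub, hw, PadicInt.coe_mul, norm_mul,
      PadicInt.coe_pow, norm_pow, PadicInt.coe_natCast, Padic.norm_p, ← PadicInt.norm_def]
    exact mul_le_of_le_one_right (by positivity) (PadicInt.norm_le_one w)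
  have ht1 : ‖(z : ℚ_[p]) - 1‖ ≤ (p : ℝ)⁻¹ :=
    ht.trans (pow_le_of_le_one (by positivity) (by linarith) hc.ne')
  have hxnorm : ‖Padic.logOneAdd ((z : ℚ_[p]) - 1) / (p : ℚ_[p]) ^ c‖ ≤ 1 := by
    rw [norm_div, norm_pow, Padic.norm_p, div_le_one (by positivity)]
    exact (Padic.norm_logOneAdd_le (by linarith)).trans ht
  refine ⟨⟨_, hxnorm⟩, rfl, ?_⟩
  rw [show (_ / (p : ℚ_[p]) ^ c) * (p : ℚ_[p]) ^ c = Padic.logOneAdd ((z : ℚ_[p]) - 1) from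
    div_mul_cancel₀ _ (pow_ne_zero _ (by exact_mod_cast hp0.ne')), Padic.exp_logOneAdd hp ht1,
    add_sub_cancel]

theorem PadicInt.exists_tendsto_natCast (x : ℤ_[p]) :
    ∃ u : ℕ → ℕ, Tendsto (fun j => (u j : ℤ_[p])) atTop (𝓝 x) := by
  obtain ⟨v, hv, hlim⟩ := mem_closure_iff_seq_limit.1
    ((PadicInt.denseRange_natCast (p := p)).closure_range ▸ Set.mem_univ x)
  choose u hu using hv
  exact ⟨u, by simpa only [hu] using hlim⟩

theorem PadicInt.tendsto_units_pow_of_val_eq_exp (hp : Odd p) {ε : ℤ_[p]ˣ}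
    (hε : ((ε : ℤ_[p]) : ℚ_[p]) = exp (p : ℚ_[p])) {c : ℕ} (hc : 0 < c) {x : ℤ_[p]} {z : ℤ_[p]ˣ}
    (hz : ((z : ℤ_[p]) : ℚ_[p]) = exp ((x : ℚ_[p]) * (p : ℚ_[p]) ^ c)) {u : ℕ → ℕ}
    (hu : Tendsto (fun j => (u j : ℤ_[p])) atTop (𝓝 x)) :
    Tendsto (fun j => ε ^ (p ^ (c - 1) * u j)) atTop (𝓝 z) := by
  have hpc : ‖(p : ℚ_[p]) ^ c‖ ≤ (p : ℝ)⁻¹ := by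
    rw [norm_pow, Padic.norm_p]
    exact pow_le_of_le_one (by positivity)
      (inv_le_one_of_one_le₀ (by exact_mod_cast (Fact.out : p.Prime).one_le)) hc.ne'
  have hval (n : ℕ) :
      ((ε ^ (p ^ (c - 1) * n) : ℤ_[p]ˣ) : ℚ_[p]) = exp ((n : ℚ_[p]) * (p : ℚ_[p]) ^ c) := by
    rw [Units.val_pow_eq_pow_val, PadicInt.coe_pow, hε,
      ← Padic.exp_natCast_mul hp Padic.norm_p.le]
    congr 1
    rw [← Nat.sub_add_cancel hc]
    push_cast
    ring
  have hxpc : ‖(x : ℚ_[p]) * (p : ℚ_[p]) ^ c‖ ≤ (p : ℝ)⁻¹ := by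
    rw [norm_mul, ← PadicInt.norm_def]
    exact (mul_le_of_le_one_left (norm_nonneg _) (PadicInt.norm_le_one x)).trans hpc
  refine Units.isOpenEmbedding_val.isInducing.tendsto_nhds_iff.2
    (PadicInt.isOpenEmbedding_coe.isInducing.tendsto_nhds_iff.2 ?_)
  rw [hz]
  exact ((Padic.continuousAt_exp hp hxpc).tendsto.comp
    (((continuous_subtype_val.tendsto x).comp hu).mul_const _)).congr fun j => (hval (u j)).symm

theorem PadicInt.coe_choose (x : ℤ_[p]) (k : ℕ) :
    ((Ring.choose x k : ℤ_[p]) : ℚ_[p]) =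
      (k.factorial : ℚ_[p])⁻¹ * ∏ i ∈ Finset.range k, ((x : ℚ_[p]) - i) := by
  have h := congrArg PadicInt.Coe.ringHom (Ring.descPochhammer_eq_factorial_smul_choose x k)
  rw [← Polynomial.aeval_eq_smeval, ← Polynomial.eval_map_algebraMap, descPochhammer_map,
    descPochhammer_eval_eq_prod_range, nsmul_eq_mul, map_prod, map_mul, map_natCast] at h
  simp only [map_sub, map_natCast] at h
  rw [eq_inv_mul_iff_mul_eq₀ (by exact_mod_cast k.factorial_ne_zero)]
  exact h.symm

section BinomialSeries

variable {A : Type*} [NormedRing A] [NormedAlgebra ℚ_[p] A]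

theorem hasSum_choose_smul_pow_natCast (U : A) (n : ℕ) :
    HasSum (fun k => ((Ring.choose (n : ℤ_[p]) k : ℤ_[p]) : ℚ_[p]) • U ^ k) ((1 + U) ^ n) := by
  have hzero : ∀ k ∉ Finset.range (n + 1),
      ((Ring.choose (n : ℤ_[p]) k : ℤ_[p]) : ℚ_[p]) • U ^ k = 0 := by
    intro k hk
    rw [Ring.choose_natCast, Nat.choose_eq_zero_of_lt (by simpa using hk)]
    simp
  have hsum : ∑ k ∈ Finset.range (n + 1), ((Ring.choose (n : ℤ_[p]) k : ℤ_[p]) : ℚ_[p]) • U ^ k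
      = (1 + U) ^ n := by
    rw [add_comm (1 : A) U, (Commute.one_right U).add_pow]
    refine Finset.sum_congr rfl fun k _ => ?_
    rw [Ring.choose_natCast, one_pow, mul_one, PadicInt.coe_natCast, Nat.cast_smul_eq_nsmul,
      nsmul_eq_mul, Nat.cast_comm]
  exact hsum ▸ hasSum_sum_of_ne_finset_zero hzero

theorem hasSum_choose_smul_pow_of_tendsto [NormOneClass A] [CompleteSpace A] {U : A}
    (hU : ‖U‖ < 1) {u : ℕ → ℕ} {x : ℤ_[p]} (hu : Tendsto (fun j => (u j : ℤ_[p])) atTop (𝓝 x))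
    {a : A} (ha : Tendsto (fun j => (1 + U) ^ u j) atTop (𝓝 a)) :
    HasSum (fun k => ((Ring.choose x k : ℤ_[p]) : ℚ_[p]) • U ^ k) a := by
  have hbound (y : ℤ_[p]) (k : ℕ) : ‖((Ring.choose y k : ℤ_[p]) : ℚ_[p]) • U ^ k‖ ≤ ‖U‖ ^ k := by
    rw [norm_smul, ← PadicInt.norm_def]
    exact (mul_le_of_le_one_left (norm_nonneg _) (PadicInt.norm_le_one _)).trans (norm_pow_le _ _)
  have hgeom := summable_geometric_of_lt_one (norm_nonneg U) hU
  have hlim := tendsto_tsum_of_dominated_convergence hgeom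
    (fun k => ((continuous_subtype_val.tendsto _).comp
      (((PadicInt.continuous_choose k).tendsto x).comp hu)).smul_const (U ^ k))
    (Eventually.of_forall fun j => hbound (u j))
  rw [← tendsto_nhds_unique
    (hlim.congr fun j => (hasSum_choose_smul_pow_natCast U (u j)).tsum_eq) ha]
  exact (hgeom.of_nonneg_of_le (fun _ => norm_nonneg _) (hbound x)).of_norm.hasSum

end BinomialSeries

end Padic

/-- a continuous character `s : ℤ_pˣ → Aˣ` with `T = s(exp p) - 1` satisfying
`‖T^{p^{c-1}}‖ < 1/p` is, on `1 + p^c ℤ_p`, given by the convergent power series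
`s(z) = Σ_k binom(log z / p^c, k) · ((1+T)^{p^{c-1}} - 1)^k`, where `log` is the `p`-adic
logarithm and `binom(x,k) = x(x-1)⋯(x-k+1)/k!`. -/
theorem stmt_8 (p : ℕ) [Fact p.Prime] (hodd : Odd p)
    (A : Type*) [NormedCommRing A] [NormedAlgebra ℚ_[p] A] [CompleteSpace A]
    (hnorm : ∀ x y : A, ‖x * y‖ = ‖x‖ * ‖y‖)
    (s : ℤ_[p]ˣ →* Aˣ)
    (hcont : Continuous fun u : ℤ_[p]ˣ => ((s u : Aˣ) : A))
    (ε : ℤ_[p]ˣ) (hε : ((ε : ℤ_[p]) : ℚ_[p]) = NormedSpace.exp (p : ℚ_[p]))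
    (T : A) (hT : T = ((s ε : Aˣ) : A) - 1)
    (c : ℕ) (hc : 0 < c)
    (hTc : ‖T ^ (p ^ (c - 1))‖ < ((p : ℝ))⁻¹)
    (z : ℤ_[p]ˣ) (hz : (p : ℤ_[p]) ^ c ∣ ((z : ℤ_[p]) - 1)) :
    HasSum
      (fun k : ℕ =>
        ((Nat.factorial k : ℚ_[p])⁻¹ *
            ∏ i ∈ Finset.range k,
              ((∑' m : ℕ, (-1 : ℚ_[p]) ^ m / ((m : ℚ_[p]) + 1) *
                  (((z : ℤ_[p]) : ℚ_[p]) - 1) ^ (m + 1)) / (p : ℚ_[p]) ^ c - (i : ℚ_[p]))) •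
          (((1 + T) ^ (p ^ (c - 1)) - 1) ^ k))
      ((s z : Aˣ) : A) := by
  rcases subsingleton_or_nontrivial A with hA | hA
  · simp [Subsingleton.elim _ (0 : A)]
  have : NormMulClass A := ⟨hnorm⟩
  have : NormOneClass A := NormMulClass.toNormOneClass
  have : IsUltrametricDist A := isUltrametricDist_of_normMulClass fun n => by
    rw [← map_natCast (algebraMap ℚ_[p] A), norm_algebraMap']
    exact IsUltrametricDist.norm_natCast_le_one _ n
  obtain ⟨x, hx, hzx⟩ := PadicInt.exists_eq_exp_mul_pow hodd hc hz
  obtain ⟨u, hu⟩ := PadicInt.exists_tendsto_natCast x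
  have hT1 : ‖T‖ < 1 := by
    rw [norm_pow] at hTc
    exact (pow_lt_one_iff_of_nonneg (norm_nonneg _) (pow_ne_zero _ (Fact.out : p.Prime).ne_zero)).1
      (hTc.trans (inv_lt_one_of_one_lt₀ (by exact_mod_cast (Fact.out : p.Prime).one_lt)))
  have hU : ‖(1 + T) ^ p ^ (c - 1) - 1‖ < 1 := (norm_one_add_pow_sub_one_le hT1.le _).trans_lt hT1
  have hs : Tendsto (fun j => (1 + ((1 + T) ^ p ^ (c - 1) - 1)) ^ u j) atTop
      (𝓝 ((s z : Aˣ) : A)) := by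
    refine ((hcont.tendsto z).comp
      (PadicInt.tendsto_units_pow_of_val_eq_exp hodd hε hc hzx hu)).congr fun j => ?_
    simp [hT, pow_mul]
  convert hasSum_choose_smul_pow_of_tendsto hU hu hs using 3 with k
  rw [PadicInt.coe_choose, hx]
  rfl
end

section
/- Let Q_1(X), Q_2(X) ∈ O_{ℂ_p}⟦X⟧ be power series with Q_1(0) = Q_2(0) = 1, and let N_1, N_2 : ℝ_{≥0} → ℝ be the functions whose graphs are their Newton polygons. Let ν be a strictly increasing continuous function on ℝ_{≥0} with ν(0) ≤ 0, lim_{x→∞} ν(x) = ∞, ν having an inverse ν^{-1} defined on ℝ_{≥0} with x·ν^{-1}(x) increasing on ℝ_{>0}, and N_i(x) ≥ x·ν(x) for i = 1,2 and all x ≥ 1. Set m_ν(x) = ⌊x·ν^{-1}(x)⌋. If Q_1(X) ≡ Q_2(X) mod p^{m_ν(α)+1} for some α ≥ 0, then the Newton polygons N_1 and N_2 coincide on all sides of slope at most α. -/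
open Set Filter Topology

/-! By the ultrametric inequality the congruence says `min (v Q₀ N) M = min (v Q₁ N) M`
with `M = m_ν(α) + 1`, so the two sequences of valuations agree below height `M`. Pick `γ > α`
with `γ ν⁻¹(γ) < M`. Above height `M` the line of slope `γ` through the origin lies under both
polygons, since a point `(N, y)` of it with `y > M` has `N > ν⁻¹(γ)`, hence `N ν(N) ≥ γ N`. A
supporting line of `N₀` at `x` of slope `< γ` therefore lies below every point of `Q₁` and thus
under `N₁`, giving `N₀ x ≤ N₁ x`. The points of `Q₀` witnessing that `N₀` has right slope `< γ`
at `x` lie below height `M`, so they are points of `Q₁` as well, and `N₁` also has right slope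
`< γ` at `x`; the symmetric argument gives `N₁ x ≤ N₀ x`. -/

section Valuation

variable {K : Type*} [Field K] {v : K → EReal}

theorem val_one (hv0 : ∀ x : K, v x = ⊤ ↔ x = 0) (hvmul : ∀ x y : K, v (x * y) = v x + v y) :
    v 1 = 0 := by
  have hidem : v 1 + v 1 = v 1 := by simpa using (hvmul 1 1).symm
  have hzero : ⊤ = ⊤ + v 1 := by simpa [(hv0 0).2 rfl] using hvmul 0 1
  have htop : v 1 ≠ ⊤ := fun h => one_ne_zero ((hv0 1).1 h)
  generalize v 1 = a at *
  induction a using EReal.rec with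
  | bot => simp at hzero
  | top => exact absurd rfl htop
  | coe r => norm_cast at hidem ⊢; linarith

theorem val_neg (hv0 : ∀ x : K, v x = ⊤ ↔ x = 0) (hvmul : ∀ x y : K, v (x * y) = v x + v y)
    (x : K) : v (-x) = v x := by
  have hsq : v (-1) + v (-1) = 0 := by
    rw [← val_one hv0 hvmul, ← hvmul, neg_one_mul, neg_neg]
  have hneg_one : v (-1) = 0 := by
    generalize v (-1) = a at *
    induction a using EReal.rec with
    | bot => simp at hsq
    | top => simp at hsq
    | coe r => norm_cast at hsq ⊢; linarith
  rw [← neg_one_mul, hvmul, hneg_one, zero_add]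

theorem min_val_eq_min_val_of_le_val_sub (hvadd : ∀ x y : K, min (v x) (v y) ≤ v (x + y))
    (hvneg : ∀ x : K, v (-x) = v x) {M : EReal} {x y : K} (h : M ≤ v (x - y)) :
    min (v x) M = min (v y) M := by
  have hyx : min (v x) M ≤ v y := by
    have hsum := hvadd x (-(x - y))
    rw [hvneg, show x + -(x - y) = y by ring] at hsum
    exact (min_le_min_left _ h).trans hsum
  have hxy : min (v y) M ≤ v x := by
    simpa using (min_le_min_left _ h).trans (hvadd y (x - y))
  exact le_antisymm (le_min hyx (min_le_right _ _)) (le_min hxy (min_le_right _ _))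

end Valuation

theorem le_of_min_eq_min {α : Type*} [LinearOrder α] {a b c : α} (h : min a c = min b c)
    (ha : a < c) : b ≤ a := by
  grind

theorem exists_slope_lt_of_derivWithin_Ioi_lt {f : ℝ → ℝ} {x γ : ℝ}
    (hf : DifferentiableWithinAt ℝ f (Ioi x) x) (hγ : derivWithin f (Ioi x) x < γ) :
    ∃ t, x < t ∧ slope f x t < γ := by
  have h := (hasDerivWithinAt_iff_tendsto_slope' self_notMem_Ioi).1 hf.hasDerivWithinAt
  exact ((h.eventually (gt_mem_nhds hγ)).and self_mem_nhdsWithin).exists.imp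
    fun t ht => ⟨ht.2, ht.1⟩

theorem mem_interior_Ici_of_lt {a x : ℝ} (h : a < x) : x ∈ interior (Ici a) := by
  rwa [interior_Ici]

theorem convexOn_affine {s : Set ℝ} (hs : Convex ℝ s) (c β x₀ : ℝ) :
    ConvexOn ℝ s fun t => c + β * (t - x₀) := by
  refine ⟨hs, fun y _ z _ a b _ _ hab => le_of_eq ?_⟩
  simp only [smul_eq_mul]
  linear_combination (β * x₀ - c) * hab

theorem ConvexOn.add_rightDeriv_mul_sub_le {S : Set ℝ} {f : ℝ → ℝ} {x t : ℝ}
    (hfc : ConvexOn ℝ S f) (hx : x ∈ interior S) (ht : t ∈ S) :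
    f x + derivWithin f (Ioi x) x * (t - x) ≤ f t := by
  rcases lt_trichotomy t x with htx | rfl | hxt
  · have h := (hfc.slope_le_leftDeriv_of_mem_interior ht hx htx).trans
      (hfc.leftDeriv_le_rightDeriv_of_mem_interior hx)
    rw [slope_def_field, div_le_iff₀ (sub_pos.2 htx)] at h
    linarith
  · simp
  · have h := hfc.rightDeriv_le_slope_of_mem_interior hx ht hxt
    rw [slope_def_field, le_div_iff₀ (sub_pos.2 hxt)] at h
    linarith

theorem ConvexOn.rightDeriv_le_of_sub_le_mul {S : Set ℝ} {f : ℝ → ℝ} {x y α : ℝ}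
    (hfc : ConvexOn ℝ S f) (hx : x ∈ interior S) (hy : y ∈ S) (hxy : x < y)
    (hα : f y - f x ≤ α * (y - x)) : derivWithin f (Ioi x) x ≤ α := by
  have h := hfc.rightDeriv_le_slope_of_mem_interior hx hy hxy
  rw [slope_def_field, le_div_iff₀ (sub_pos.2 hxy)] at h
  exact le_of_mul_le_mul_right (h.trans hα) (sub_pos.2 hxy)

theorem exists_gt_mul_lt_of_strictMonoOn {ν w : ℝ → ℝ} (hν : StrictMonoOn ν (Ici 0))
    (hw : ∀ t : ℝ, 0 ≤ t → 0 ≤ w t ∧ ν (w t) = t) {α M : ℝ} (hα : 0 ≤ α)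
    (hM : α * w α < M) : ∃ γ, α < γ ∧ γ * w γ < M := by
  obtain ⟨hW, hνW⟩ := hw α hα
  have hnear : ∀ᶠ δ in 𝓝[>] (0 : ℝ), (α + δ) * (w α + δ) < M := by
    have hc : Tendsto (fun δ : ℝ => (α + δ) * (w α + δ)) (𝓝 0) (𝓝 (α * w α)) := by
      simpa using (show Continuous fun δ : ℝ => (α + δ) * (w α + δ) by fun_prop).tendsto 0
    exact nhdsWithin_le_nhds (hc.eventually (gt_mem_nhds hM))
  obtain ⟨δ, hδM, hδ : 0 < δ⟩ := (hnear.and self_mem_nhdsWithin).exists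
  have hνδ : α < ν (w α + δ) :=
    hνW.symm.trans_lt (hν hW (mem_Ici.2 (by linarith)) (lt_add_of_pos_right (w α) hδ))
  obtain ⟨γ, hαγ, hγ⟩ := exists_between (lt_min hνδ (lt_add_of_pos_right α hδ))
  obtain ⟨hwγ, hνwγ⟩ := hw γ (by linarith)
  have hwγ_lt : w γ < w α + δ := by
    by_contra! h
    have := hν.monotoneOn (mem_Ici.2 (by linarith)) hwγ h
    linarith [min_le_left (ν (w α + δ)) (α + δ)]
  refine ⟨γ, hαγ, lt_of_le_of_lt ?_ hδM⟩
  have : γ ≤ α + δ := hγ.le.trans (min_le_right _ _)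
  gcongr

theorem mul_natCast_le_of_lt_mul {ν f : ℝ → ℝ} (hν : StrictMonoOn ν (Ici 0))
    (hf : ∀ t : ℝ, 1 ≤ t → t * ν t ≤ f t) {W M γ : ℝ} (hW : 0 ≤ W) (hνW : ν W = γ)
    (hγ : 0 ≤ γ) (hM : γ * W ≤ M) {N : ℕ} (hN : M < γ * N) : γ * N ≤ f N := by
  have hWN : W < N := lt_of_not_ge fun h => hN.not_ge (hM.trans' (by gcongr))
  have hN1 : (1 : ℝ) ≤ N := by
    exact_mod_cast Nat.one_le_iff_ne_zero.2 (by rintro rfl; simp at hWN; linarith)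
  calc γ * N ≤ ν N * N := by gcongr; exact hνW ▸ (hν hW (mem_Ici.2 N.cast_nonneg) hWN).le
    _ = N * ν N := mul_comm _ _
    _ ≤ f N := hf N hN1

structure IsNewtonPolygon (a : ℕ → EReal) (f : ℝ → ℝ) : Prop where
  convexOn : ConvexOn ℝ (Ici 0) f
  le : ∀ N : ℕ, (f N : EReal) ≤ a N
  le_of_convexOn : ∀ g : ℝ → ℝ, ConvexOn ℝ (Ici 0) g → (∀ N : ℕ, (g N : EReal) ≤ a N) →
    ∀ x ∈ Ici (0 : ℝ), g x ≤ f x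

namespace IsNewtonPolygon

variable {a b : ℕ → EReal} {f g : ℝ → ℝ} {M γ x : ℝ}

theorem map_zero (hf : IsNewtonPolygon a f) (h0 : a 0 = 0) (ha : ∀ N, 0 ≤ a N) : f 0 = 0 := by
  refine le_antisymm ?_ ?_
  · exact_mod_cast (hf.le 0).trans h0.le
  · exact hf.le_of_convexOn (fun _ => 0) (convexOn_const 0 (convex_Ici 0)) (by simpa using ha)
      0 self_mem_Ici

/-- If `f` had right slope `< γ` at `x` without such a point, the maximum of its supporting line
and the line of slope `γ` at `x` would be a larger convex minorant. -/
theorem exists_lt_of_rightDeriv_lt (hf : IsNewtonPolygon a f) (hx : 0 < x)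
    (hγ : derivWithin f (Ioi x) x < γ) :
    ∃ N : ℕ, x < N ∧ a N < ((f x + γ * (N - x) : ℝ) : EReal) := by
  set β := derivWithin f (Ioi x) x
  have hsupp : ∀ t : ℝ, 0 ≤ t → f x + β * (t - x) ≤ f t := fun t ht =>
    hf.convexOn.add_rightDeriv_mul_sub_le (mem_interior_Ici_of_lt hx) ht
  by_contra! h
  have hmax : ∀ N : ℕ, ((max (f x + β * (N - x)) (f x + γ * (N - x)) : ℝ) : EReal) ≤ a N := by
    intro N
    have hβN : ((f x + β * (N - x) : ℝ) : EReal) ≤ a N :=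
      (EReal.coe_le_coe_iff.2 (hsupp N N.cast_nonneg)).trans (hf.le N)
    rcases le_or_gt (N : ℝ) x with hNx | hxN
    · rwa [max_eq_left (by nlinarith)]
    · rw [EReal.coe_strictMono.monotone.map_max]; exact max_le hβN (h N hxN)
  have hconv := (convexOn_affine (convex_Ici 0) (f x) β x).sup
    (convexOn_affine (convex_Ici 0) (f x) γ x)
  obtain ⟨t, hxt, hslope⟩ := exists_slope_lt_of_derivWithin_Ioi_lt
    (hf.convexOn.differentiableWithinAt_Ioi_of_mem_interior (mem_interior_Ici_of_lt hx)) hγ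
  have hle := (le_max_right _ _).trans (hf.le_of_convexOn _ hconv hmax t (by simp; linarith))
  rw [slope_def_field, div_lt_iff₀ (sub_pos.2 hxt)] at hslope
  linarith

theorem le_of_rightDeriv_le (hf : IsNewtonPolygon a f) (hg : IsNewtonPolygon b g)
    (hab : ∀ N, min (a N) M = min (b N) M) (hgγ : ∀ N : ℕ, M < γ * N → γ * N ≤ g N)
    (hf0 : f 0 ≤ 0) (hx : 0 < x) (hγ : derivWithin f (Ioi x) x ≤ γ) : f x ≤ g x := by
  set β := derivWithin f (Ioi x) x
  have hsupp : ∀ t : ℝ, 0 ≤ t → f x + β * (t - x) ≤ f t := fun t ht =>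
    hf.convexOn.add_rightDeriv_mul_sub_le (mem_interior_Ici_of_lt hx) ht
  have hline : ∀ N : ℕ, ((f x + β * (N - x) : ℝ) : EReal) ≤ b N := by
    intro N
    by_cases hM : f x + β * (N - x) ≤ M
    · calc ((f x + β * (N - x) : ℝ) : EReal)
          ≤ min (a N) M := le_min ((EReal.coe_le_coe_iff.2 (hsupp N N.cast_nonneg)).trans
            (hf.le N)) (EReal.coe_le_coe_iff.2 hM)
        _ = min (b N) M := hab N
        _ ≤ b N := min_le_left _ _
    · have hγN : f x + β * (N - x) ≤ γ * N := by
        nlinarith [hsupp 0 le_rfl, N.cast_nonneg (α := ℝ)]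
      exact (EReal.coe_le_coe_iff.2 (hγN.trans (hgγ N (by linarith)))).trans (hg.le N)
  simpa using hg.le_of_convexOn _ (convexOn_affine (convex_Ici 0) (f x) β x) hline x hx.le

/-- The points of `a` witnessing the right slope of `f` at `x` lie below height `M`, hence are
points of `b` too. -/
theorem rightDeriv_lt_of_le (hf : IsNewtonPolygon a f) (hg : IsNewtonPolygon b g)
    (hab : ∀ N, min (a N) M = min (b N) M) (hfγ : ∀ N : ℕ, M < γ * N → γ * N ≤ f N)
    (hf0 : f 0 ≤ 0) (hx : 0 < x) (hγ : derivWithin f (Ioi x) x < γ) (hfg : f x ≤ g x) :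
    derivWithin g (Ioi x) x < γ := by
  obtain ⟨N, hxN, haN⟩ := hf.exists_lt_of_rightDeriv_lt hx hγ
  have hfx : f x ≤ derivWithin f (Ioi x) x * x := by
    linarith [hf.convexOn.add_rightDeriv_mul_sub_le (mem_interior_Ici_of_lt hx) (le_refl (0 : ℝ))]
  have hγN : f x + γ * (N - x) ≤ γ * N := by nlinarith
  have hMN : ¬ M < γ * N := fun h =>
    haN.not_ge ((EReal.coe_le_coe_iff.2 (hγN.trans (hfγ N h))).trans (hf.le N))
  have hbN : b N ≤ a N := le_of_min_eq_min (hab N)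
    (haN.trans_le (EReal.coe_le_coe_iff.2 (hγN.trans (not_lt.1 hMN))))
  have hgN : g N < f x + γ * (N - x) :=
    EReal.coe_lt_coe_iff.1 (((hg.le N).trans hbN).trans_lt haN)
  have hslope : slope g x N < γ := by
    rw [slope_def_field, div_lt_iff₀ (sub_pos.2 hxN)]
    linarith
  exact (hg.convexOn.rightDeriv_le_slope_of_mem_interior (mem_interior_Ici_of_lt hx)
    (mem_Ici.2 (by linarith)) hxN).trans_lt hslope

theorem eq_of_rightDeriv_lt (hf : IsNewtonPolygon a f) (hg : IsNewtonPolygon b g)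
    (hab : ∀ N, min (a N) M = min (b N) M) (hfγ : ∀ N : ℕ, M < γ * N → γ * N ≤ f N)
    (hgγ : ∀ N : ℕ, M < γ * N → γ * N ≤ g N) (hf0 : f 0 ≤ 0) (hg0 : g 0 ≤ 0) (hx : 0 < x)
    (hγ : derivWithin f (Ioi x) x < γ) : f x = g x := by
  have hfg := hf.le_of_rightDeriv_le hg hab hgγ hf0 hx hγ.le
  have hgγ' := hf.rightDeriv_lt_of_le hg hab hfγ hf0 hx hγ hfg
  exact le_antisymm hfg (hg.le_of_rightDeriv_le hf (fun N => (hab N).symm) hfγ hg0 hx hgγ'.le)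

end IsNewtonPolygon

theorem stmt_12_general (K : Type*) [Field K]
    (v : K → EReal)
    (hv0 : ∀ x : K, v x = ⊤ ↔ x = 0)
    (hvmul : ∀ x y : K, v (x * y) = v x + v y)
    (hvadd : ∀ x y : K, min (v x) (v y) ≤ v (x + y))
    (Q : Fin 2 → ℕ → K) (hQ0 : ∀ i, Q i 0 = 1)
    (hQint : ∀ (i : Fin 2) (N : ℕ), (0 : EReal) ≤ v (Q i N))
    (NP : Fin 2 → ℝ → ℝ)
    (hNPconv : ∀ i, ConvexOn ℝ (Set.Ici (0 : ℝ)) (NP i))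
    (hNPle : ∀ (i : Fin 2) (N : ℕ), ((NP i N : ℝ) : EReal) ≤ v (Q i N))
    (hNPmax : ∀ (i : Fin 2) (g : ℝ → ℝ), ConvexOn ℝ (Set.Ici (0 : ℝ)) g →
      (∀ N : ℕ, ((g N : ℝ) : EReal) ≤ v (Q i N)) → ∀ x ∈ Set.Ici (0 : ℝ), g x ≤ NP i x)
    (ν w : ℝ → ℝ)
    (hνmono : StrictMonoOn ν (Set.Ici (0 : ℝ)))
    (hw : ∀ x : ℝ, 0 ≤ x → 0 ≤ w x ∧ ν (w x) = x)
    (hbound : ∀ (i : Fin 2) (x : ℝ), 1 ≤ x → x * ν x ≤ NP i x)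
    (α : ℝ) (hα : 0 ≤ α)
    (hcong : ∀ N : ℕ, (((⌊α * w α⌋ + 1 : ℤ) : ℝ) : EReal) ≤ v (Q 0 N - Q 1 N)) :
    ∀ x : ℝ, 0 ≤ x →
      ((∃ y : ℝ, x < y ∧ NP 0 y - NP 0 x ≤ α * (y - x)) ∨
        (∃ y : ℝ, x < y ∧ NP 1 y - NP 1 x ≤ α * (y - x))) →
      NP 0 x = NP 1 x := by
  intro x hx hslope
  have hNP (i : Fin 2) : IsNewtonPolygon (fun N => v (Q i N)) (NP i) :=
    ⟨hNPconv i, hNPle i, hNPmax i⟩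
  have hNP0 (i : Fin 2) : NP i 0 = 0 :=
    (hNP i).map_zero (by simp [hQ0, val_one hv0 hvmul]) (hQint i)
  rcases hx.eq_or_lt with rfl | hx
  · rw [hNP0, hNP0]
  set M : ℝ := ((⌊α * w α⌋ + 1 : ℤ) : ℝ)
  have htrunc (N : ℕ) : min (v (Q 0 N)) (M : EReal) = min (v (Q 1 N)) M :=
    min_val_eq_min_val_of_le_val_sub hvadd (val_neg hv0 hvmul) (hcong N)
  have hM : α * w α < M := by
    simpa only [M, Int.cast_add, Int.cast_one] using Int.lt_floor_add_one (α * w α)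
  obtain ⟨γ, hαγ, hγM⟩ := exists_gt_mul_lt_of_strictMonoOn hνmono hw hα hM
  obtain ⟨hwγ, hνwγ⟩ := hw γ (hα.trans hαγ.le)
  have hgrowth (i : Fin 2) (N : ℕ) (hN : M < γ * N) : γ * N ≤ NP i N :=
    mul_natCast_le_of_lt_mul hνmono (hbound i) hwγ hνwγ (hα.trans hαγ.le) hγM.le hN
  have hderiv (i : Fin 2) (y : ℝ) (hxy : x < y) (hy : NP i y - NP i x ≤ α * (y - x)) :
      derivWithin (NP i) (Ioi x) x < γ :=
    ((hNPconv i).rightDeriv_le_of_sub_le_mul (mem_interior_Ici_of_lt hx)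
      (mem_Ici.2 (by linarith)) hxy hy).trans_lt hαγ
  rcases hslope with ⟨y, hxy, hy⟩ | ⟨y, hxy, hy⟩
  · exact (hNP 0).eq_of_rightDeriv_lt (hNP 1) htrunc (hgrowth 0) (hgrowth 1) (hNP0 0).le
      (hNP0 1).le hx (hderiv 0 y hxy hy)
  · exact ((hNP 1).eq_of_rightDeriv_lt (hNP 0) (fun N => (htrunc N).symm) (hgrowth 1)
      (hgrowth 0) (hNP0 1).le (hNP0 0).le hx (hderiv 1 y hxy hy)).symm

/-- Wan's lemma: if two power series over `O_{ℂ_p}` (here: over the ring of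
integers of a field `K` with an additive valuation `v` with `v p = 1`) with constant term `1`
are congruent mod `p^{m_ν(α)+1}`, and both Newton polygons `N_i` lie above `x·ν(x)` for
`x ≥ 1`, then the Newton polygons coincide on all sides of slope at most `α`. -/
theorem stmt_12 (p : ℕ) (hp : p.Prime) (K : Type*) [Field K]
    (v : K → EReal)
    (hv0 : ∀ x : K, v x = ⊤ ↔ x = 0)
    (hvmul : ∀ x y : K, v (x * y) = v x + v y)
    (hvadd : ∀ x y : K, min (v x) (v y) ≤ v (x + y))
    (hvp : v ((p : K)) = 1)
    (Q : Fin 2 → ℕ → K) (hQ0 : ∀ i, Q i 0 = 1)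
    (hQint : ∀ (i : Fin 2) (N : ℕ), (0 : EReal) ≤ v (Q i N))
    (NP : Fin 2 → ℝ → ℝ)
    (hNPconv : ∀ i, ConvexOn ℝ (Set.Ici (0 : ℝ)) (NP i))
    (hNPle : ∀ (i : Fin 2) (N : ℕ), ((NP i N : ℝ) : EReal) ≤ v (Q i N))
    (hNPmax : ∀ (i : Fin 2) (g : ℝ → ℝ), ConvexOn ℝ (Set.Ici (0 : ℝ)) g →
      (∀ N : ℕ, ((g N : ℝ) : EReal) ≤ v (Q i N)) → ∀ x ∈ Set.Ici (0 : ℝ), g x ≤ NP i x)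
    (ν w : ℝ → ℝ)
    (hνmono : StrictMonoOn ν (Set.Ici (0 : ℝ)))
    (hνcont : ContinuousOn ν (Set.Ici (0 : ℝ)))
    (hν0 : ν 0 ≤ 0)
    (hνtop : Tendsto ν atTop atTop)
    (hw : ∀ x : ℝ, 0 ≤ x → 0 ≤ w x ∧ ν (w x) = x)
    (hw' : ∀ x : ℝ, 0 ≤ x → w (ν x) = x)
    (hxw : MonotoneOn (fun x => x * w x) (Set.Ioi (0 : ℝ)))
    (hbound : ∀ (i : Fin 2) (x : ℝ), 1 ≤ x → x * ν x ≤ NP i x)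
    (α : ℝ) (hα : 0 ≤ α)
    (hcong : ∀ N : ℕ, (((⌊α * w α⌋ + 1 : ℤ) : ℝ) : EReal) ≤ v (Q 0 N - Q 1 N)) :
    ∀ x : ℝ, 0 ≤ x →
      ((∃ y : ℝ, x < y ∧ NP 0 y - NP 0 x ≤ α * (y - x)) ∨
        (∃ y : ℝ, x < y ∧ NP 1 y - NP 1 x ≤ α * (y - x))) →
      NP 0 x = NP 1 x :=
  stmt_12_general K v hv0 hvmul hvadd Q hQ0 hQint NP hNPconv hNPle hNPmax ν w hνmono hw hbound α hα
    hcong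
end

section
/- Let p be prime, n ≥ 2, and for each i let χ_i : ℤ_pˣ → ℂˣ be a finite-order character with conductor c_i (the least positive integer m with 1 + p^m ℤ_p ⊆ ker χ_i), satisfying c_i := cond(χ_i) and cond(χ_i χ_j^{-1}) = max(c_i, c_j) for all i ≠ j. Suppose χ_n is trivial and let c_{(1)} ≤ ⋯ ≤ c_{(n−1)} be the conductors c_1,…,c_{n−1} in increasing order. Define the subgroup J = Γ(c̄) ≤ GL_n(ℤ_p) where c̄_{ii}=0, c̄_{ij} = ⌊max(c_i,c_j)/2⌋ for i < j, and c̄_{ij} = ⌊(max(c_i,c_j)+1)/2⌋ for i > j. Then the index of J in the Iwahori subgroup I (matrices upper triangular mod p) equals p^{c_{(1)} + 2c_{(2)} + ⋯ + (n−1)c_{(n−1)} − n(n−1)/2}. -/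
/-!
Fix `N` bounding all exponents. `J` and `I` are cut out by entrywise congruences
`p ^ b i j ∣ x i j - δ i j` of level at most `N`, so both contain the kernel of the surjection
`GL_n(ℤ_p) → GL_n(ℤ/p^N)`, and `[I : J]` is the index of their images, which are cut out by the
same congruences. These images consist of matrices that are upper triangular mod `p`, hence
invertible exactly when their diagonal entries are units; so each image is in bijection with a
product of independent entrywise conditions, and since `p ^ k ∣ z` has `p ^ (N - k)` solutions
in `ℤ/p^N`, the index is `p ^ Σ (c̄ i j - [j < i])`. Finally `c̄ i j + c̄ j i = max (c i) (c j)`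
for `i ≠ j`, and for increasingly ordered conductors `Σ_{i ≠ j} max (d i) (d j) = 2 Σ_k k d k`.
-/

open IsLocalRing

theorem ZMod.natCast_dvd_iff_castHom_eq_zero {m n : ℕ} [NeZero n] (h : m ∣ n) (w : ZMod n) :
    (m : ZMod n) ∣ w ↔ ZMod.castHom h (ZMod m) w = 0 := by
  constructor
  · rintro ⟨v, rfl⟩
    rw [map_mul, map_natCast, ZMod.natCast_self, zero_mul]
  · intro hw
    rw [← ZMod.natCast_zmod_val w, map_natCast, ZMod.natCast_eq_zero_iff] at hw
    obtain ⟨t, ht⟩ := hw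
    rw [← ZMod.natCast_zmod_val w, ht, Nat.cast_mul]
    exact dvd_mul_right _ _

theorem ZMod.card_natCast_dvd {m n : ℕ} [NeZero n] (h : m ∣ n) :
    Nat.card {w : ZMod n // (m : ZMod n) ∣ w} = n / m := by
  have hm : m ≠ 0 := by rintro rfl; exact NeZero.ne n (zero_dvd_iff.mp h)
  have := (ZMod.castHom h (ZMod m)).toAddMonoidHom.ker.card_mul_index
  rw [AddSubgroup.index_ker, AddMonoidHom.range_eq_top.mpr (ZMod.castHom_surjective h),
    AddSubgroup.card_top, Nat.card_zmod, Nat.card_zmod] at this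
  rw [← Nat.eq_div_of_mul_eq_left hm this]
  exact Nat.card_congr (Equiv.subtypeEquivRight fun w => natCast_dvd_iff_castHom_eq_zero h w)

theorem PadicInt.pow_dvd_iff_pow_dvd_toZModPow {p : ℕ} [Fact p.Prime] {k N : ℕ} (hk : k ≤ N)
    (z : ℤ_[p]) : (p : ℤ_[p]) ^ k ∣ z ↔ (p : ZMod (p ^ N)) ^ k ∣ toZModPow N z := by
  rw [← Nat.cast_pow (α := ZMod (p ^ N)), ZMod.natCast_dvd_iff_castHom_eq_zero (pow_dvd_pow p hk),
    ← RingHom.comp_apply, zmod_cast_comp_toZModPow _ _ hk, ← RingHom.mem_ker, ker_toZModPow,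
    Ideal.mem_span_singleton]

theorem Matrix.isUnit_det_iff_of_lower_mem_maximalIdeal {R ι : Type*} [CommRing R] [IsLocalRing R]
    [Fintype ι] [LinearOrder ι] {M : Matrix ι ι R} (h : ∀ i j, j < i → M i j ∈ maximalIdeal R) :
    IsUnit M.det ↔ ∀ i, IsUnit (M i i) := by
  have htri : (M.map (residue R)).IsUpperTriangular := fun i j hij =>
    (residue_eq_zero_iff _).mpr (h i j hij)
  have hdet : residue R M.det = ∏ i, residue R (M i i) := by
    rw [RingHom.map_det, RingHom.mapMatrix_apply, Matrix.det_of_isUpperTriangular htri]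
    rfl
  simp only [← residue_ne_zero_iff_isUnit, hdet, Finset.prod_ne_zero_iff, Finset.mem_univ,
    true_imp_iff]

theorem Matrix.GeneralLinearGroup.map_surjective {n R S : Type*} [Fintype n] [DecidableEq n]
    [CommRing R] [CommRing S] {f : R →+* S} [IsLocalHom f] (hf : Function.Surjective f) :
    Function.Surjective (map (n := n) f) := by
  intro y
  choose g hg using hf
  let M : Matrix n n R := Matrix.of fun i j => g ((y : Matrix n n S) i j)
  have hM : M.map f = y := by ext i j; simp [M, hg]
  have hMu : IsUnit M := by
    rw [Matrix.isUnit_iff_isUnit_det]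
    apply isUnit_of_map_unit f
    rw [RingHom.map_det, RingHom.mapMatrix_apply, hM, ← Matrix.isUnit_iff_isUnit_det]
    exact y.isUnit
  exact ⟨hMu.unit, Units.ext (by simpa using hM)⟩

namespace Matrix

variable {ι R : Type*} [CommRing R]

def IsCongrOne [DecidableEq ι] (q : R) (b : ι → ι → ℕ) (M : Matrix ι ι R) : Prop :=
  ∀ i j, q ^ b i j ∣ M i j - (1 : Matrix ι ι R) i j

def congrOneEntries [DecidableEq ι] (q : R) (b : ι → ι → ℕ) (i j : ι) : Set R :=
  {z | q ^ b i j ∣ z - (1 : Matrix ι ι R) i j ∧ (i = j → IsUnit z)}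

theorem card_congrOneEntries_zmod_eq_pow_mul [DecidableEq ι] {p N : ℕ} [Fact p.Prime]
    {a b : ι → ι → ℕ} {i j : ι} (hab : a i j ≤ b i j) (hbN : b i j ≤ N)
    (hdiag : i = j → a i j = b i j) :
    Nat.card (congrOneEntries (p : ZMod (p ^ N)) a i j) =
      p ^ (b i j - a i j) * Nat.card (congrOneEntries (p : ZMod (p ^ N)) b i j) := by
  rcases eq_or_ne i j with rfl | hij
  · simp only [congrOneEntries, hdiag rfl, Nat.sub_self, pow_zero, one_mul]
  have hcard {c : ι → ι → ℕ} (hc : c i j ≤ N) :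
      Nat.card (congrOneEntries (p : ZMod (p ^ N)) c i j) = p ^ (N - c i j) := by
    rw [← Nat.pow_div hc (Fact.out : p.Prime).pos, ← ZMod.card_natCast_dvd (pow_dvd_pow p hc)]
    refine Nat.card_congr (Equiv.subtypeEquivRight fun z => ?_)
    simp [congrOneEntries, one_apply_ne hij, hij]
  rw [hcard (hab.trans hbN), hcard hbN, ← pow_add]
  congr 1
  omega

section LocalRing

variable [Fintype ι] [LinearOrder ι] [IsLocalRing R] {q : R} {b : ι → ι → ℕ}

theorem isUnit_iff_of_isCongrOne (hq : q ∈ maximalIdeal R) (hb : ∀ i j, j < i → b i j ≠ 0)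
    {M : Matrix ι ι R} (hM : IsCongrOne q b M) : IsUnit M ↔ ∀ i, IsUnit (M i i) := by
  rw [isUnit_iff_isUnit_det]
  refine isUnit_det_iff_of_lower_mem_maximalIdeal fun i j hji => ?_
  have hdvd := hM i j
  rw [one_apply_ne hji.ne', sub_zero] at hdvd
  exact Ideal.mem_of_dvd _ hdvd (Ideal.pow_mem_of_mem _ hq _ (Nat.pos_of_ne_zero (hb i j hji)))

theorem card_isCongrOne_eq_prod (hq : q ∈ maximalIdeal R) (hb : ∀ i j, j < i → b i j ≠ 0) :
    Nat.card {y : GL ι R // IsCongrOne q b (y : Matrix ι ι R)} =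
      ∏ i, ∏ j, Nat.card (congrOneEntries q b i j) := by
  have hmem {M : Matrix ι ι R} (hM : IsCongrOne q b M) (hu : IsUnit M) (i j : ι) :
      M i j ∈ congrOneEntries q b i j :=
    ⟨hM i j, fun hij => hij ▸ (isUnit_iff_of_isCongrOne hq hb hM).mp hu i⟩
  let toEntries (y : {y : GL ι R // IsCongrOne q b (y : Matrix ι ι R)}) :
      {M : Matrix ι ι R // ∀ i j, M i j ∈ congrOneEntries q b i j} :=
    ⟨y.1, hmem y.2 y.1.isUnit⟩
  have hbij : Function.Bijective toEntries := by
    refine ⟨fun y y' h => Subtype.ext (Units.ext (congrArg Subtype.val h)), fun M => ?_⟩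
    have hM : IsCongrOne q b M.1 := fun i j => (M.2 i j).1
    have hu : IsUnit M.1 := (isUnit_iff_of_isCongrOne hq hb hM).mpr fun i => (M.2 i i).2 rfl
    exact ⟨⟨hu.unit, hM⟩, rfl⟩
  let toPi : {M : Matrix ι ι R // ∀ i j, M i j ∈ congrOneEntries q b i j} ≃
      ∀ i j, congrOneEntries q b i j :=
    Equiv.subtypePiEquivPi.trans (Equiv.piCongrRight fun _ => Equiv.subtypePiEquivPi)
  simp only [Nat.card_eq_of_bijective toEntries hbij, Nat.card_congr toPi, Nat.card_pi]

end LocalRing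

end Matrix

open Matrix

theorem PadicInt.isCongrOne_map_toZModPow_iff {p : ℕ} [Fact p.Prime] {ι : Type*} [Fintype ι]
    [DecidableEq ι] {N : ℕ} {b : ι → ι → ℕ} (hbN : ∀ i j, b i j ≤ N) (x : GL ι ℤ_[p]) :
    IsCongrOne (p : ZMod (p ^ N)) b (GeneralLinearGroup.map (toZModPow N) x : Matrix ι ι _) ↔
      IsCongrOne (p : ℤ_[p]) b (x : Matrix ι ι ℤ_[p]) := by
  refine forall₂_congr fun i j => ?_
  have hone :
      toZModPow N ((1 : Matrix ι ι ℤ_[p]) i j) = (1 : Matrix ι ι (ZMod (p ^ N))) i j := by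
    simpa using congrFun₂ (Matrix.map_one (toZModPow (p := p) N) (map_zero _) (map_one _)) i j
  rw [pow_dvd_iff_pow_dvd_toZModPow (hbN i j), map_sub, hone]
  rfl

section Index

variable {p : ℕ} [Fact p.Prime] {ι : Type*} [Fintype ι] [LinearOrder ι] {a b : ι → ι → ℕ}

theorem ZMod.relIndex_eq_pow_of_isCongrOne {N : ℕ} (hN : N ≠ 0) (hab : a ≤ b)
    (hbN : ∀ i j, b i j ≤ N) (hdiag : ∀ i, a i i = b i i) (ha : ∀ i j, j < i → a i j ≠ 0)
    {H K : Subgroup (GL ι (ZMod (p ^ N)))}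
    (hH : ∀ y, y ∈ H ↔ IsCongrOne (p : ZMod (p ^ N)) b (y : Matrix ι ι _))
    (hK : ∀ y, y ∈ K ↔ IsCongrOne (p : ZMod (p ^ N)) a (y : Matrix ι ι _)) :
    H.relIndex K = p ^ ∑ i, ∑ j, (b i j - a i j) := by
  have hnil : IsNilpotent (p : ZMod (p ^ N)) := ⟨N, by rw [← Nat.cast_pow, ZMod.natCast_self]⟩
  have : Nontrivial (ZMod (p ^ N)) :=
    ZMod.nontrivial_iff.mpr (Nat.one_lt_pow hN (Fact.out : p.Prime).one_lt).ne'
  have : IsLocalRing (ZMod (p ^ N)) :=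
    .of_surjective' (PadicInt.toZModPow (p := p) N) (ZMod.ringHom_surjective _)
  have hq : (p : ZMod (p ^ N)) ∈ maximalIdeal _ := hnil.not_isUnit
  have hb (i j : ι) (hji : j < i) : b i j ≠ 0 :=
    ((Nat.pos_of_ne_zero (ha i j hji)).trans_le (hab i j)).ne'
  have hcardK : Nat.card K = Nat.card H * p ^ ∑ i, ∑ j, (b i j - a i j) := by
    have hentries (i j : ι) := card_congrOneEntries_zmod_eq_pow_mul (p := p) (hab i j) (hbN i j)
      fun h => by subst h; exact hdiag i
    simp only [Nat.card_congr (Equiv.subtypeEquivRight hK),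
      Nat.card_congr (Equiv.subtypeEquivRight hH), card_isCongrOne_eq_prod hq ha,
      card_isCongrOne_eq_prod hq hb, hentries,
      Finset.prod_mul_distrib, Finset.prod_pow_eq_pow_sum, mul_comm]
  have hHK : H ≤ K := fun y hy => (hK y).mpr fun i j =>
    (pow_dvd_pow _ (hab i j)).trans ((hH y).mp hy i j)
  have hmul : Nat.card H * H.relIndex K = Nat.card K := by
    rw [← Subgroup.relIndex_bot_left, ← Subgroup.relIndex_bot_left,
      Subgroup.relIndex_mul_relIndex _ _ _ bot_le hHK]
  rw [hcardK] at hmul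
  exact Nat.eq_of_mul_eq_mul_left Nat.card_pos hmul

theorem PadicInt.relIndex_eq_pow_of_isCongrOne (hab : a ≤ b) (hdiag : ∀ i, a i i = b i i)
    (ha : ∀ i j, j < i → a i j ≠ 0) {H K : Subgroup (GL ι ℤ_[p])}
    (hH : ∀ x, x ∈ H ↔ IsCongrOne (p : ℤ_[p]) b (x : Matrix ι ι _))
    (hK : ∀ x, x ∈ K ↔ IsCongrOne (p : ℤ_[p]) a (x : Matrix ι ι _)) :
    H.relIndex K = p ^ ∑ i, ∑ j, (b i j - a i j) := by
  obtain ⟨M, hM⟩ := Finite.exists_le fun ij : ι × ι => b ij.1 ij.2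
  set N := M + 1
  have hbN (i j : ι) : b i j ≤ N := (hM (i, j)).trans M.le_succ
  have haN (i j : ι) : a i j ≤ N := (hab i j).trans (hbN i j)
  have : Nontrivial (ZMod (p ^ N)) :=
    ZMod.nontrivial_iff.mpr (Nat.one_lt_pow M.succ_ne_zero (Fact.out : p.Prime).one_lt).ne'
  let π := GeneralLinearGroup.map (n := ι) (toZModPow (p := p) N)
  have hπ : Function.Surjective π := GeneralLinearGroup.map_surjective (ZMod.ringHom_surjective _)
  have hmap {L : Subgroup (GL ι ℤ_[p])} {c : ι → ι → ℕ} (hcN : ∀ i j, c i j ≤ N)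
      (hL : ∀ x, x ∈ L ↔ IsCongrOne (p : ℤ_[p]) c (x : Matrix ι ι _)) :
      π.ker ≤ L ∧ ∀ y, y ∈ L.map π ↔ IsCongrOne (p : ZMod (p ^ N)) c (y : Matrix ι ι _) := by
    refine ⟨fun x hx => ?_, fun y => ⟨?_, fun hy => ?_⟩⟩
    · rw [hL, ← isCongrOne_map_toZModPow_iff hcN, (MonoidHom.mem_ker).mp hx]
      intro i j
      simp
    · rintro ⟨x, hx, rfl⟩
      exact (isCongrOne_map_toZModPow_iff hcN x).mpr ((hL x).mp hx)
    · obtain ⟨x, rfl⟩ := hπ y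
      exact ⟨x, (hL x).mpr ((isCongrOne_map_toZModPow_iff hcN x).mp hy), rfl⟩
  obtain ⟨hkerH, hHπ⟩ := hmap hbN hH
  obtain ⟨hkerK, hKπ⟩ := hmap haN hK
  rw [← ZMod.relIndex_eq_pow_of_isCongrOne M.succ_ne_zero hab hbN hdiag ha hHπ hKπ,
    Subgroup.relIndex_map_map, sup_eq_left.mpr hkerH, sup_eq_left.mpr hkerK]

end Index

section Exponents

variable {ι : Type*} [LinearOrder ι]

def rocheExponent (c : ι → ℕ) (i j : ι) : ℕ :=
  if i = j then 0 else if i < j then max (c i) (c j) / 2 else (max (c i) (c j) + 1) / 2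

def iwahoriExponent (i j : ι) : ℕ :=
  if j < i then 1 else 0

theorem rocheExponent_add_rocheExponent_swap (c : ι → ℕ) (i j : ι) :
    rocheExponent c i j + rocheExponent c j i = if i = j then 0 else max (c i) (c j) := by
  unfold rocheExponent
  rcases lt_trichotomy i j with h | rfl | h
  · simp only [h.ne, h.ne', h, not_lt_of_gt h, if_false, if_true, max_comm (c j)]
    omega
  · simp
  · simp only [h.ne, h.ne', h, not_lt_of_gt h, if_false, if_true, max_comm (c j)]
    omega

theorem iwahoriExponent_le_rocheExponent {c : ι → ℕ} (hc : ∀ i, 0 < c i) :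
    iwahoriExponent ≤ rocheExponent c := fun i j => by
  have := (hc i).trans_le (le_max_left (c i) (c j))
  rcases lt_or_ge j i with hji | hij
  · simp only [iwahoriExponent, rocheExponent, hji, hji.ne', not_lt_of_gt hji, if_true, if_false]
    omega
  · simp only [iwahoriExponent, not_lt.mpr hij, if_false, zero_le]

theorem isCongrOne_iwahoriExponent_iff {R : Type*} [CommRing R] {q : R} {M : Matrix ι ι R} :
    IsCongrOne q iwahoriExponent M ↔ ∀ i j, j < i → q ∣ M i j := by
  refine ⟨fun h i j hji => ?_, fun h i j => ?_⟩
  · simpa [iwahoriExponent, hji, one_apply_ne hji.ne'] using h i j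
  · unfold iwahoriExponent
    split_ifs with hji
    · simpa [one_apply_ne hji.ne'] using h i j hji
    · simp

end Exponents

theorem Fin.sum_ite_lt {n : ℕ} (j : Fin n) (x : ℕ) :
    ∑ i : Fin n, (if i < j then x else 0) = j * x := by
  simp [Finset.sum_ite, Finset.filter_gt_eq_Iio]

theorem Fin.sum_sum_ite_eq_max_of_monotone {n : ℕ} {d : Fin n → ℕ} (hd : Monotone d) :
    ∑ i, ∑ j, (if i = j then 0 else max (d i) (d j)) = 2 * ∑ i : Fin n, (i : ℕ) * d i := by
  have hsplit (i j : Fin n) : (if i = j then 0 else max (d i) (d j)) =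
      (if j < i then d i else 0) + (if i < j then d j else 0) := by
    rcases lt_trichotomy i j with h | rfl | h
    · simp [h, h.ne, not_lt_of_gt h, hd h.le]
    · simp
    · simp [h, h.ne', not_lt_of_gt h, hd h.le]
  simp only [hsplit, Finset.sum_add_distrib, Fin.sum_ite_lt]
  rw [Finset.sum_comm (f := fun i j : Fin n => if i < j then d j else 0)]
  simp only [Fin.sum_ite_lt]
  ring

theorem Fin.sum_sum_rocheExponent {n : ℕ} {c d : Fin n → ℕ} (hd : Monotone d)
    (e : Equiv.Perm (Fin n)) (hde : ∀ i, d i = c (e i)) :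
    ∑ i, ∑ j, rocheExponent c i j = ∑ i : Fin n, (i : ℕ) * d i := by
  have hperm : ∑ i, ∑ j, (if i = j then 0 else max (d i) (d j)) =
      ∑ i, ∑ j, (if i = j then 0 else max (c i) (c j)) :=
    Fintype.sum_equiv e _ _ fun i => Fintype.sum_equiv e _ _ fun j => by
      simp [hde, e.injective.eq_iff]
  have hsymm : 2 * ∑ i, ∑ j, rocheExponent c i j =
      ∑ i, ∑ j, (if i = j then 0 else max (c i) (c j)) := by
    rw [two_mul]
    nth_rw 2 [Finset.sum_comm]
    simp only [← Finset.sum_add_distrib, rocheExponent_add_rocheExponent_swap]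
  rw [← hperm, Fin.sum_sum_ite_eq_max_of_monotone hd] at hsymm
  omega

theorem Fin.sum_sum_iwahoriExponent (n : ℕ) :
    ∑ i : Fin n, ∑ j : Fin n, iwahoriExponent i j = n * (n - 1) / 2 := by
  simp only [iwahoriExponent, Fin.sum_ite_lt, mul_one]
  rw [Fin.sum_univ_eq_sum_range (fun i => i) n, Finset.sum_range_id]

/-- for finite-order characters `χ_1,…,χ_n` of `ℤ_pˣ` with conductors
`c_1,…,c_n` satisfying `cond(χ_i χ_j⁻¹) = max(c_i, c_j)` and with `χ_n` trivial, the Roche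
subgroup `J = Γ(c̄)` has index `p^{c_{(1)} + 2c_{(2)} + ⋯ + (n-1)c_{(n-1)} - n(n-1)/2}` in
the Iwahori subgroup `I`.  Here `d` is a monotone rearrangement of all `n` conductors
(the trivial character contributing the minimal conductor `1`), so that
`Σ_k k·d_k = Σ_i i·c_{(i)}`. -/
theorem stmt_18 (p : ℕ) [Fact p.Prime] (n : ℕ)
    (χ : Fin n → (ℤ_[p]ˣ →* ℂˣ))
    (cc : Fin n → ℕ)
    (hcond : ∀ i, IsLeast
      {m : ℕ | 0 < m ∧ ∀ u : ℤ_[p]ˣ, (p : ℤ_[p]) ^ m ∣ ((u : ℤ_[p]) - 1) → χ i u = 1} (cc i))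
    (d : Fin n → ℕ) (hd : Monotone d)
    (e : Equiv.Perm (Fin n)) (hde : ∀ i, d i = cc (e i))
    (J : Subgroup (Matrix.GeneralLinearGroup (Fin n) ℤ_[p]))
    (hJ : ∀ x : Matrix.GeneralLinearGroup (Fin n) ℤ_[p], x ∈ J ↔
      ∀ i j : Fin n,
        (p : ℤ_[p]) ^ (if i = j then 0
            else if i < j then max (cc i) (cc j) / 2
            else (max (cc i) (cc j) + 1) / 2) ∣
          ((x : Matrix (Fin n) (Fin n) ℤ_[p]) i j - if i = j then 1 else 0))
    (I : Subgroup (Matrix.GeneralLinearGroup (Fin n) ℤ_[p]))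
    (hI : ∀ x : Matrix.GeneralLinearGroup (Fin n) ℤ_[p], x ∈ I ↔
      ∀ i j : Fin n, j < i → (p : ℤ_[p]) ∣ (x : Matrix (Fin n) (Fin n) ℤ_[p]) i j) :
    J.relIndex I = p ^ ((∑ i : Fin n, (i : ℕ) * d i) - n * (n - 1) / 2) := by
  have hle := iwahoriExponent_le_rocheExponent fun i => (hcond i).1.1
  have hI' (x : GL (Fin n) ℤ_[p]) :
      x ∈ I ↔ IsCongrOne (p : ℤ_[p]) iwahoriExponent (x : Matrix (Fin n) (Fin n) ℤ_[p]) :=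
    (hI x).trans isCongrOne_iwahoriExponent_iff.symm
  -- `hJ` says `x ∈ J ↔ IsCongrOne p (rocheExponent cc) x` after unfolding the definitions.
  rw [PadicInt.relIndex_eq_pow_of_isCongrOne hle (fun i => by simp [iwahoriExponent, rocheExponent])
    (fun i j hji => by simp [iwahoriExponent, hji]) hJ hI',
    ← Fin.sum_sum_rocheExponent hd e hde, ← Fin.sum_sum_iwahoriExponent n,
    ← Finset.sum_tsub_distrib _ fun i _ => Finset.sum_le_sum fun j _ => hle i j]
  simp only [Finset.sum_tsub_distrib _ fun j _ => hle _ j]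
end
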